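/- For each p ∈ X^#, the function d_p^#(s,q) = inf{r ≥ 0 : B(S,r) ∈ q for every S ∈ s} defines a semi-metric on p̆ = {q ∈ X^# : q ∥ p}: it is symmetric and satisfies the triangle inequality. -/

import Mathlib

open Metric Bornology Set

variable {X : Type*} [MetricSpace X]

/-- `B(A,r) = ⋃_{a∈A} B(a,r)` where `B(a,r)` is the closed ball of radius `r`. -/
def ballU (A : Set X) (r : ℝ) : Set X := ⋃ a ∈ A, Metric.closedBall a r

/-- `X^#`: the set of ultrafilters on `X` all of whose members are unbounded. -/
def sharp (X : Type*) [MetricSpace X] : Set (Ultrafilter X) :=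
  {p | ∀ P ∈ p, ¬ Bornology.IsBounded P}

/-- Parallelity: `p ∥ q` iff there is `r ≥ 0` with `B(Q,r) ∈ p` for every `Q ∈ q`. -/
def Par (p q : Ultrafilter X) : Prop :=
  ∃ r : ℝ, 0 ≤ r ∧ ∀ Q ∈ q, ballU Q r ∈ p

/-- `p̆ = {q ∈ X^# : q ∥ p}`. -/
def pbreve (p : Ultrafilter X) : Set (Ultrafilter X) :=
  {q | q ∈ sharp X ∧ Par q p}

/-- The `p`-companion `Δ_p(Y) = {q ∈ X^# : Y ∈ q, q ∥ p}`. -/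
def Delta (p : Ultrafilter X) (Y : Set X) : Set (Ultrafilter X) :=
  {q | q ∈ sharp X ∧ Y ∈ q ∧ Par q p}

/-- A set `S ⊆ X^#` is invariant if `p ∈ S`, `q ∈ X^#`, `q ∥ p` imply `q ∈ S`. -/
def Invt (S : Set (Ultrafilter X)) : Prop :=
  ∀ p ∈ S, ∀ q, q ∈ sharp X → Par q p → q ∈ S

/-- `Y` is large if `X = B(Y,r)` for some `r ≥ 0`. -/
def Large (Y : Set X) : Prop := ∃ r : ℝ, 0 ≤ r ∧ ballU Y r = Set.univ

/-- `Y` is thick if for every `r ≥ 0` there is `y ∈ Y` with `B(y,r) ⊆ Y`. -/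
def Thick (Y : Set X) : Prop := ∀ r : ℝ, 0 ≤ r → ∃ y ∈ Y, Metric.closedBall y r ⊆ Y

/-- `Y` is prethick if `B(Y,r)` is thick for some `r ≥ 0`. -/
def Prethick (Y : Set X) : Prop := ∃ r : ℝ, 0 ≤ r ∧ Thick (ballU Y r)

/-- `Y` is small if `(X∖Y) ∩ L` is large for every large `L`. -/
def SmallSet (Y : Set X) : Prop := ∀ L : Set X, Large L → Large (Yᶜ ∩ L)

/-- `Y` is thin if for each `r ≥ 0` there is a bounded `V` with
`B(y,r) ∩ Y = {y}` for all `y ∈ Y∖V`. -/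
def Thin (Y : Set X) : Prop :=
  ∀ r : ℝ, 0 ≤ r → ∃ V : Set X, Bornology.IsBounded V ∧
    ∀ y ∈ Y \ V, Metric.closedBall y r ∩ Y = {y}

/-- `Y` is `n`-thin if for each `r ≥ 0` there is a bounded `V` with
`|B(y,r) ∩ Y| ≤ n` for all `y ∈ Y∖V`. -/
def NThin (n : ℕ) (Y : Set X) : Prop :=
  ∀ r : ℝ, 0 ≤ r → ∃ V : Set X, Bornology.IsBounded V ∧
    ∀ y ∈ Y \ V, (Metric.closedBall y r ∩ Y).encard ≤ n

/-- `M` is a minimal nonempty closed invariant subset of `X^#`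
(closures/closedness taken in the Stone topology on ultrafilters). -/
def MinCI (M : Set (Ultrafilter X)) : Prop :=
  M ⊆ sharp X ∧ M.Nonempty ∧ IsClosed M ∧ Invt M ∧
    ∀ S ⊆ M, S.Nonempty → IsClosed S → Invt S → S = M

/-- The semi-metric `d_p^#(s,q) = inf {r ≥ 0 : B(S,r) ∈ q for every S ∈ s}`. -/
noncomputable def dSharp (s q : Ultrafilter X) : ℝ :=
  sInf {r : ℝ | 0 ≤ r ∧ ∀ S ∈ s, ballU S r ∈ q}

/-!
A radius `r` is admissible from `s` to `q` when `B(S,r) ∈ q` for all `S ∈ s`. Admissibility is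
symmetric, because an ultrafilter contains either `B(Q,r)` or its complement `C`, and `B(C,r)`
misses `Q`; and admissible radii add along a chain `s, q, t`, because `B(B(S,a),b) ⊆ B(S,a+b)`.
Passing to infima gives symmetry and the triangle inequality; parallelism to `p` guarantees
that the infima are taken over nonempty sets.
-/

open scoped Pointwise

lemma mem_ballU {A : Set X} {r : ℝ} {x : X} : x ∈ ballU A r ↔ ∃ a ∈ A, dist x a ≤ r := by
  simp [ballU, Metric.mem_closedBall]

lemma ballU_ballU_subset (A : Set X) (a b : ℝ) : ballU (ballU A a) b ⊆ ballU A (a + b) := by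
  intro x hx
  obtain ⟨y, hy, hxy⟩ := mem_ballU.1 hx
  obtain ⟨z, hz, hyz⟩ := mem_ballU.1 hy
  exact mem_ballU.2 ⟨z, hz, (dist_triangle x y z).trans (by linarith)⟩

lemma ballU_mem_swap {s q : Ultrafilter X} {r : ℝ} (h : ∀ S ∈ s, ballU S r ∈ q) :
    ∀ Q ∈ q, ballU Q r ∈ s := by
  intro Q hQ
  by_contra hQs
  have hC : ballU (ballU Q r)ᶜ r ∈ q := h _ (Ultrafilter.compl_mem_iff_notMem.2 hQs)
  obtain ⟨x, hxQ, hxC⟩ := Filter.nonempty_of_mem (Filter.inter_mem hQ hC)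
  obtain ⟨c, hc, hxc⟩ := mem_ballU.1 hxC
  exact hc (mem_ballU.2 ⟨x, hxQ, by rwa [dist_comm]⟩)

lemma Par.symm {p q : Ultrafilter X} : Par p q → Par q p
  | ⟨r, hr, h⟩ => ⟨r, hr, ballU_mem_swap h⟩

lemma Par.trans {p q t : Ultrafilter X} : Par p q → Par q t → Par p t
  | ⟨a, ha, hpq⟩, ⟨b, hb, hqt⟩ =>
    ⟨b + a, add_nonneg hb ha, fun T hT =>
      Filter.mem_of_superset (hpq _ (hqt T hT)) (ballU_ballU_subset T b a)⟩

def admissibleRadii (s q : Ultrafilter X) : Set ℝ :=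
  {r : ℝ | 0 ≤ r ∧ ∀ S ∈ s, ballU S r ∈ q}

lemma dSharp_eq_sInf_admissibleRadii (s q : Ultrafilter X) :
    dSharp s q = sInf (admissibleRadii s q) := rfl

lemma admissibleRadii_nonempty {s q : Ultrafilter X} (h : Par q s) :
    (admissibleRadii s q).Nonempty := h

lemma bddBelow_admissibleRadii (s q : Ultrafilter X) : BddBelow (admissibleRadii s q) :=
  ⟨0, fun _ hr => hr.1⟩

lemma admissibleRadii_comm (s q : Ultrafilter X) :
    admissibleRadii s q = admissibleRadii q s := by
  ext r
  exact ⟨fun ⟨h0, h⟩ => ⟨h0, ballU_mem_swap h⟩, fun ⟨h0, h⟩ => ⟨h0, ballU_mem_swap h⟩⟩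

lemma admissibleRadii_add_subset (s q t : Ultrafilter X) :
    admissibleRadii s q + admissibleRadii q t ⊆ admissibleRadii s t := by
  rintro _ ⟨a, ⟨ha0, ha⟩, b, ⟨hb0, hb⟩, rfl⟩
  exact ⟨add_nonneg ha0 hb0, fun S hS =>
    Filter.mem_of_superset (hb _ (ha S hS)) (ballU_ballU_subset S a b)⟩

lemma dSharp_comm (s q : Ultrafilter X) : dSharp s q = dSharp q s := by
  rw [dSharp_eq_sInf_admissibleRadii, admissibleRadii_comm, dSharp_eq_sInf_admissibleRadii]

lemma dSharp_nonneg (s q : Ultrafilter X) : 0 ≤ dSharp s q :=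
  Real.sInf_nonneg fun _ hr => hr.1

lemma dSharp_triangle {s q t : Ultrafilter X} (hsq : Par q s) (hqt : Par t q) :
    dSharp s t ≤ dSharp s q + dSharp q t := by
  have hsq' := admissibleRadii_nonempty hsq
  have hqt' := admissibleRadii_nonempty hqt
  simp only [dSharp_eq_sInf_admissibleRadii]
  calc sInf (admissibleRadii s t)
      ≤ sInf (admissibleRadii s q + admissibleRadii q t) :=
        csInf_le_csInf (bddBelow_admissibleRadii s t) (hsq'.add hqt')
          (admissibleRadii_add_subset s q t)
    _ = sInf (admissibleRadii s q) + sInf (admissibleRadii q t) :=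
        csInf_add hsq' (bddBelow_admissibleRadii s q) hqt' (bddBelow_admissibleRadii q t)

theorem stmt17_general (p : Ultrafilter X) :
    (∀ s ∈ pbreve p, ∀ q ∈ pbreve p, dSharp s q = dSharp q s) ∧
    (∀ s ∈ pbreve p, ∀ q ∈ pbreve p, ∀ t ∈ pbreve p,
      dSharp s t ≤ dSharp s q + dSharp q t) ∧
    (∀ s ∈ pbreve p, ∀ q ∈ pbreve p, 0 ≤ dSharp s q) :=
  ⟨fun s _ q _ => dSharp_comm s q,
    fun _ hs _ hq _ ht => dSharp_triangle (hq.2.trans hs.2.symm) (ht.2.trans hq.2.symm),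
    fun s _ q _ => dSharp_nonneg s q⟩

theorem stmt17 (hX : ¬ Bornology.IsBounded (Set.univ : Set X))
    (p : Ultrafilter X) (hp : p ∈ sharp X) :
    (∀ s ∈ pbreve p, ∀ q ∈ pbreve p, dSharp s q = dSharp q s) ∧
    (∀ s ∈ pbreve p, ∀ q ∈ pbreve p, ∀ t ∈ pbreve p,
      dSharp s t ≤ dSharp s q + dSharp q t) ∧
    (∀ s ∈ pbreve p, ∀ q ∈ pbreve p, 0 ≤ dSharp s q) :=
  stmt17_general p
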